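/- arXiv:1506.06679 — 7 statements merged into one kernel-verified Lean document; each statement's English description precedes it below -/
import Mathlib

section
/- Fix α > 0 and an integer k ≥ 1, and define h_k(x) = ∑_{j=0}^{k} (-1)^j (k choose j) (x - j)_+^α for x ∈ ℝ, where y_+ = max{y, 0}. Then there exists a constant K > 0 such that |h_k(x)| ≤ K (x - k)^{α - k} for all x > k + 1. -/
/-!
The sum is the `k`-th forward difference with step `1` of `t ↦ t ^ α` at `x - k`. By induction
on `k`, using the mean value theorem on the `(k-1)`-th difference, a `k`-th difference of a
`C^k` function equals its `k`-th derivative at some point of `[x - k, x]`; here that derivative is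
`α (α - 1) ⋯ (α - k + 1) ξ ^ (α - k)`. For `x > k + 1` the point `ξ` lies in
`[x - k, (k + 1) (x - k)]`, so `ξ ^ (α - k)` is within a factor `(k + 1) ^ |α - k|` of
`(x - k) ^ (α - k)`.
-/

open Finset Set
open scoped fwdDiff

-- `(Δ_[h])^[n]` needs the parentheses: `]^` is a token of the exterior power notation.

theorem hasDerivAt_fwdDiff_iter {f f' : ℝ → ℝ} {h x : ℝ} {n : ℕ}
    (hf : ∀ k ≤ n, HasDerivAt f (f' (x + k * h)) (x + k * h)) :
    HasDerivAt ((Δ_[h])^[n] f) ((Δ_[h])^[n] f' x) x := by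
  induction n generalizing f f' with
  | zero => simpa using hf 0 le_rfl
  | succ n ih =>
    refine ih fun k hk => ?_
    have hshift : HasDerivAt (fun t => f (t + h)) (f' (x + k * h + h)) (x + k * h) := by
      have := hf (k + 1) (by omega)
      rw [show x + ((k + 1 : ℕ) : ℝ) * h = x + k * h + h by push_cast; ring] at this
      exact this.comp_add_const _ _
    exact hshift.sub (hf k (by omega))

theorem exists_fwdDiff_iter_eq_pow_mul_iterate_deriv {f : ℝ → ℝ} {s : Set ℝ} {n : ℕ} {h y : ℝ}
    (hs : IsOpen s) (hf : ContDiffOn ℝ n f s) (hh : 0 < h) (hy : Icc y (y + n * h) ⊆ s) :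
    ∃ ξ ∈ Icc y (y + n * h), (Δ_[h])^[n] f y = h ^ n * deriv^[n] f ξ := by
  induction n generalizing f y with
  | zero => exact ⟨y, by simp, by simp⟩
  | succ n ih =>
    obtain ⟨hdiff, -, hf'⟩ :=
      (contDiffOn_succ_iff_deriv_of_isOpen (n := n) hs).1 (by exact_mod_cast hf)
    have hderiv : ∀ t ∈ Icc y (y + h),
        HasDerivAt ((Δ_[h])^[n] f) ((Δ_[h])^[n] (deriv f) t) t := fun t ht =>
      hasDerivAt_fwdDiff_iter fun k hk => by
        have hk' : (k : ℝ) ≤ n := by exact_mod_cast hk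
        refine (hdiff.differentiableAt (hs.mem_nhds (hy ⟨?_, ?_⟩))).hasDerivAt
        · nlinarith [ht.1]
        · push_cast; nlinarith [ht.2]
    obtain ⟨η, hη, hslope⟩ := exists_hasDerivAt_eq_slope _ _ (by linarith : y < y + h)
      (fun t ht => (hderiv t ht).continuousAt.continuousWithinAt)
      (fun t ht => hderiv t (Ioo_subset_Icc_self ht))
    obtain ⟨ξ, hξ, hξeq⟩ := ih hf' (y := η) (fun t ht => hy ⟨by linarith [hη.1, ht.1], by
      push_cast; linarith [hη.2, ht.2]⟩)
    refine ⟨ξ, ⟨by linarith [hη.1, hξ.1], by push_cast; linarith [hη.2, hξ.2]⟩, ?_⟩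
    rw [hξeq, add_sub_cancel_left, eq_div_iff hh.ne'] at hslope
    rw [Function.iterate_succ_apply', Function.iterate_succ_apply, fwdDiff, ← hslope]
    ring

theorem sum_range_choose_mul_sub_eq_fwdDiff_iter (f : ℝ → ℝ) (n : ℕ) (x : ℝ) :
    ∑ j ∈ range (n + 1), (-1 : ℝ) ^ j * n.choose j * f (x - j) = (Δ_[1])^[n] f (x - n) := by
  rw [fwdDiff_iter_eq_sum_shift, ← sum_range_reflect]
  refine sum_congr rfl fun j hj => ?_
  have hj : j ≤ n := Nat.lt_succ_iff.mp (mem_range.mp hj)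
  simp only [add_tsub_cancel_right, Nat.choose_symm hj, zsmul_eq_mul,
    nsmul_eq_mul, Nat.cast_sub hj]
  push_cast
  ring_nf

theorem exists_sum_choose_mul_rpow_eq (c x : ℝ) (n : ℕ) (hx : n < x) :
    ∃ ξ ∈ Icc (x - n) x, ∑ j ∈ range (n + 1), (-1 : ℝ) ^ j * n.choose j * (x - j) ^ c =
      (descPochhammer ℝ n).eval c * ξ ^ (c - n) := by
  have hsmooth : ContDiffOn ℝ n (fun t : ℝ => t ^ c) (Ioi 0) := fun t ht =>
    (Real.contDiffAt_rpow_const_of_ne (ne_of_gt ht)).contDiffWithinAt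
  obtain ⟨ξ, hξ, hΔ⟩ := exists_fwdDiff_iter_eq_pow_mul_iterate_deriv isOpen_Ioi hsmooth one_pos
    (y := x - n) fun t ht => show 0 < t by linarith [ht.1]
  rw [mul_one, sub_add_cancel] at hξ
  refine ⟨ξ, hξ, ?_⟩
  rw [sum_range_choose_mul_sub_eq_fwdDiff_iter (fun t => t ^ c), hΔ, one_pow, one_mul,
    Real.iter_deriv_rpow_const]

theorem rpow_le_rpow_abs_mul_rpow {a b c e : ℝ} (ha : 0 < a) (hab : a ≤ b) (hbc : b ≤ c * a) :
    b ^ e ≤ c ^ |e| * a ^ e := by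
  have hq : 1 ≤ b / a := (one_le_div ha).2 hab
  calc b ^ e = (b / a) ^ e * a ^ e := by
        rw [← Real.mul_rpow (by positivity) ha.le, div_mul_cancel₀ _ ha.ne']
    _ ≤ (b / a) ^ |e| * a ^ e := by gcongr; exact le_abs_self e
    _ ≤ c ^ |e| * a ^ e := by gcongr; exact (div_le_iff₀ ha).2 hbc

theorem stmt_1_general (α : ℝ) (k : ℕ) :
    ∃ K : ℝ, 0 < K ∧ ∀ x : ℝ, (k : ℝ) + 1 < x →
      |∑ j ∈ Finset.range (k + 1),
          (-1 : ℝ) ^ j * (k.choose j : ℝ) * (max (x - (j : ℝ)) 0) ^ α|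
        ≤ K * (x - (k : ℝ)) ^ (α - (k : ℝ)) := by
  set P := (descPochhammer ℝ k).eval α
  refine ⟨(|P| + 1) * (k + 1) ^ |α - k|, by positivity, fun x hx => ?_⟩
  have hxk : 0 < x - k := by linarith
  have hmax : ∀ j ∈ range (k + 1), max (x - j) 0 = x - j := fun j hj => by
    have : (j : ℝ) ≤ k := by exact_mod_cast Nat.lt_succ_iff.mp (mem_range.mp hj)
    exact max_eq_left (by linarith)
  obtain ⟨ξ, hξ, hsum⟩ := exists_sum_choose_mul_rpow_eq α x k (by linarith)
  have hξ_le : ξ ≤ (k + 1) * (x - k) := by nlinarith [hξ.2]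
  rw [sum_congr rfl fun j hj => by rw [hmax j hj], hsum, abs_mul,
    abs_of_nonneg (Real.rpow_nonneg (hxk.trans_le hξ.1).le _), mul_assoc]
  calc |P| * ξ ^ (α - k) ≤ |P| * ((k + 1) ^ |α - k| * (x - k) ^ (α - k)) := by
        gcongr; exact rpow_le_rpow_abs_mul_rpow hxk hξ.1 hξ_le
    _ ≤ (|P| + 1) * ((k + 1) ^ |α - k| * (x - k) ^ (α - k)) := by
        gcongr; linarith

/-- For `α > 0` and an integer `k ≥ 1`, with
`h_k(x) = ∑_{j=0}^{k} (-1)^j (k choose j) (x - j)_+^α`, there is a constant `K > 0`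
such that `|h_k(x)| ≤ K (x - k)^(α - k)` for all `x > k + 1`. -/
theorem stmt_1 (α : ℝ) (hα : 0 < α) (k : ℕ) (hk : 1 ≤ k) :
    ∃ K : ℝ, 0 < K ∧ ∀ x : ℝ, (k : ℝ) + 1 < x →
      |∑ j ∈ Finset.range (k + 1),
          (-1 : ℝ) ^ j * (k.choose j : ℝ) * (max (x - (j : ℝ)) 0) ^ α|
        ≤ K * (x - (k : ℝ)) ^ (α - (k : ℝ)) :=
  stmt_1_general α k
end

section
/- Fix α > 0, an integer k ≥ 1, and β ∈ (0, 2) with α < k − 1/β. Then the function h_k(x) = ∑_{j=0}^{k} (-1)^j (k choose j) (x−j)_+^α belongs to L^β(ℝ), i.e. ∫_ℝ |h_k(x)|^β dx < ∞. -/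
/-!
On `(-∞, 0]` every term of `h_k` vanishes, and `h_k` is continuous, so only the tail matters.
For `x > k` no truncation is active and `h_k x` is the `k`-th forward difference of `t ↦ t ^ α`
at `x - k`. Applying the mean value theorem `k` times turns it into a `k`-th derivative
`α (α - 1) ⋯ (α - k + 1) ξ ^ (α - k)` with `ξ ≥ x - k`, so `|h_k x| ^ β = O((x - k) ^ ((α - k) β))`,
which is integrable at infinity because `(α - k) β < -1`.
-/

open MeasureTheory Set Finset

theorem hasDerivAt_fwdDiff_iter_s2 {𝕜 F : Type*} [NontriviallyNormedField 𝕜] [NormedAddCommGroup F]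
    [NormedSpace 𝕜 F] {f f' : 𝕜 → F} {h y : 𝕜} {n : ℕ}
    (hf : ∀ i ≤ n, HasDerivAt f (f' (y + i • h)) (y + i • h)) :
    HasDerivAt ((fwdDiff h)^[n] f) ((fwdDiff h)^[n] f' y) y := by
  rw [funext (fwdDiff_iter_eq_sum_shift h f n), fwdDiff_iter_eq_sum_shift]
  exact HasDerivAt.fun_sum fun i hi =>
    ((hf i (Nat.lt_succ_iff.mp (mem_range.mp hi))).comp_add_const y _).fun_const_smul _

theorem abs_fwdDiff_iter_le {f : ℝ → ℝ} {n : ℕ} {y M : ℝ}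
    (hf : ∀ m < n, ∀ t ∈ Icc y (y + n), DifferentiableAt ℝ (deriv^[m] f) t)
    (hM : ∀ t ∈ Icc y (y + n), |deriv^[n] f t| ≤ M) :
    |(fwdDiff 1)^[n] f y| ≤ M := by
  induction n generalizing f y with
  | zero => simpa using hM y (by simp)
  | succ n ih =>
    have hderiv : ∀ t ∈ Icc y (y + 1),
        HasDerivAt ((fwdDiff 1)^[n] f) ((fwdDiff 1)^[n] (deriv f) t) t := by
      refine fun t ht => hasDerivAt_fwdDiff_iter_s2 fun i hi => (hf 0 n.succ_pos _ ?_).hasDerivAt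
      simp only [nsmul_eq_mul, mul_one, Set.mem_Icc] at ht ⊢
      push_cast
      constructor <;> linarith [ht.1, ht.2, (Nat.cast_le (α := ℝ)).mpr hi]
    obtain ⟨ξ, hξ, hslope⟩ := exists_hasDerivAt_eq_slope _ _ (lt_add_one y)
      (fun t ht => (hderiv t ht).continuousAt.continuousWithinAt)
      (fun t ht => hderiv t (Ioo_subset_Icc_self ht))
    have hsub : Icc ξ (ξ + n) ⊆ Icc y (y + ↑(n + 1)) := by
      push_cast
      exact Icc_subset_Icc hξ.1.le (by linarith [hξ.2])
    have hdiff : (fwdDiff 1)^[n + 1] f y = (fwdDiff 1)^[n] (deriv f) ξ := by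
      rw [hslope, add_sub_cancel_left, div_one, Function.iterate_succ_apply']
      rfl
    rw [hdiff]
    refine ih (fun m hm t ht => ?_) (fun t ht => ?_)
    · rw [← Function.iterate_succ_apply]
      exact hf (m + 1) (by omega) t (hsub ht)
    · rw [← Function.iterate_succ_apply]
      exact hM t (hsub ht)

theorem sum_alternating_choose_mul_sub_eq_fwdDiff_iter (g : ℝ → ℝ) (n : ℕ) (x : ℝ) :
    ∑ j ∈ range (n + 1), (-1 : ℝ) ^ j * (n.choose j : ℝ) * g (x - j) =
      (fwdDiff 1)^[n] g (x - n) := by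
  rw [fwdDiff_iter_eq_sum_shift]
  conv_rhs => rw [← sum_range_reflect]
  refine sum_congr rfl fun j hj => ?_
  have hjn : j ≤ n := Nat.lt_succ_iff.mp (mem_range.mp hj)
  rw [Nat.add_sub_cancel, Nat.sub_sub_self hjn, Nat.choose_symm hjn, zsmul_eq_mul, nsmul_eq_mul,
    Nat.cast_sub hjn]
  push_cast
  ring_nf

theorem abs_fwdDiff_iter_rpow_le {a y : ℝ} {n : ℕ} (hy : 0 < y) (ha : a ≤ n) :
    |(fwdDiff 1)^[n] (fun t : ℝ => t ^ a) y| ≤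
      |(descPochhammer ℝ n).eval a| * y ^ (a - n) := by
  have hderiv (m : ℕ) : deriv^[m] (fun t : ℝ => t ^ a) =
      fun t => (descPochhammer ℝ m).eval a * t ^ (a - m) :=
    funext (Real.iter_deriv_rpow_const a · m)
  refine abs_fwdDiff_iter_le (fun m _ t ht => ?_) (fun t ht => ?_)
  · rw [hderiv]
    exact (Real.differentiableAt_rpow_const_of_ne _ (hy.trans_le ht.1).ne').const_mul _
  · rw [hderiv, abs_mul, abs_of_pos (Real.rpow_pos_of_pos (hy.trans_le ht.1) (a - n))]
    exact mul_le_mul_of_nonneg_left (Real.rpow_le_rpow_of_nonpos hy ht.1 (sub_nonpos.mpr ha))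
      (abs_nonneg _)

noncomputable def truncPowDiff (α : ℝ) (k : ℕ) (x : ℝ) : ℝ :=
  ∑ j ∈ range (k + 1), (-1 : ℝ) ^ j * (k.choose j : ℝ) * (max (x - (j : ℝ)) 0) ^ α

theorem truncPowDiff_of_nonpos {α x : ℝ} (k : ℕ) (hα : α ≠ 0) (hx : x ≤ 0) :
    truncPowDiff α k x = 0 :=
  sum_eq_zero fun j _ => by
    rw [max_eq_right (by linarith [j.cast_nonneg (α := ℝ)]), Real.zero_rpow hα, mul_zero]

theorem continuous_truncPowDiff {α : ℝ} (k : ℕ) (hα : 0 ≤ α) : Continuous (truncPowDiff α k) :=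
  continuous_finsetSum _ fun _ _ =>
    continuous_const.mul (((continuous_sub_right _).max continuous_const).rpow_const
      fun _ => Or.inr hα)

theorem measurable_truncPowDiff (α : ℝ) (k : ℕ) : Measurable (truncPowDiff α k) := by
  unfold truncPowDiff
  fun_prop

theorem abs_truncPowDiff_le {α x : ℝ} {k : ℕ} (hαk : α ≤ k) (hx : k < x) :
    |truncPowDiff α k x| ≤ |(descPochhammer ℝ k).eval α| * (x - k) ^ (α - k) := by
  have hmax : truncPowDiff α k x =
      ∑ j ∈ range (k + 1), (-1 : ℝ) ^ j * (k.choose j : ℝ) * (x - j) ^ α :=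
    sum_congr rfl fun j hj => by
      have hjk : (j : ℝ) ≤ k := by exact_mod_cast Nat.lt_succ_iff.mp (mem_range.mp hj)
      rw [max_eq_left (by linarith)]
  rw [hmax, sum_alternating_choose_mul_sub_eq_fwdDiff_iter (fun t => t ^ α)]
  exact abs_fwdDiff_iter_rpow_le (sub_pos.mpr hx) hαk

theorem integrableOn_Ioi_sub_rpow {p : ℝ} (hp : p < -1) (c : ℝ) :
    IntegrableOn (fun x : ℝ => (x - c) ^ p) (Ioi (c + 1)) := by
  have := ((measurePreserving_sub_right volume c).integrableOn_comp_preimage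
    (measurableEmbedding_subRight c)).mpr (integrableOn_Ioi_rpow_of_lt hp one_pos)
  rwa [preimage_sub_const_Ioi, add_comm] at this

theorem integrableOn_Ioi_abs_truncPowDiff_rpow {α β : ℝ} {k : ℕ} (hβ : 0 < β)
    (h : α < k - 1 / β) :
    IntegrableOn (fun x => |truncPowDiff α k x| ^ β) (Ioi (k + 1)) := by
  have hdecay : (α - k) * β < -1 := by
    have := mul_lt_mul_of_pos_right (by linarith : α - k < -(1 / β)) hβ
    rwa [neg_mul, one_div_mul_cancel hβ.ne'] at this
  have hαk : α ≤ k := by linarith [one_div_pos.mpr hβ]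
  set C := |(descPochhammer ℝ k).eval α|
  refine ((integrableOn_Ioi_sub_rpow hdecay k).const_mul (C ^ β)).mono'
    ((measurable_truncPowDiff α k).abs.pow_const β).aestronglyMeasurable
    ((ae_restrict_iff' measurableSet_Ioi).mpr (Filter.Eventually.of_forall fun x hx => ?_))
  have hxk : (0 : ℝ) ≤ x - k := by linarith [mem_Ioi.mp hx]
  rw [Real.norm_eq_abs, abs_of_nonneg (by positivity), Real.rpow_mul hxk,
    ← Real.mul_rpow (abs_nonneg _) (by positivity)]
  exact Real.rpow_le_rpow (abs_nonneg _) (abs_truncPowDiff_le hαk (by linarith [mem_Ioi.mp hx]))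
    hβ.le

theorem stmt_2_general (α : ℝ) (hα : 0 < α) (k : ℕ) (β : ℝ)
    (hβ : β ∈ Set.Ioo (0 : ℝ) 2) (h : α < (k : ℝ) - 1 / β) :
    Integrable (fun x : ℝ =>
      |∑ j ∈ Finset.range (k + 1),
          (-1 : ℝ) ^ j * (k.choose j : ℝ) * (max (x - (j : ℝ)) 0) ^ α| ^ β) := by
  change Integrable fun x => |truncPowDiff α k x| ^ β
  have hcont : Continuous fun x => |truncPowDiff α k x| ^ β :=
    (continuous_truncPowDiff k hα.le).abs.rpow_const fun _ => Or.inr hβ.1.le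
  have hzero : IntegrableOn (fun x => |truncPowDiff α k x| ^ β) (Iic 0) :=
    integrableOn_zero.congr_fun (fun x hx => by
      rw [truncPowDiff_of_nonpos k hα.ne' hx, abs_zero, Real.zero_rpow hβ.1.ne']) measurableSet_Iic
  rw [← integrableOn_univ, ← Iic_union_Ioi (a := (k : ℝ) + 1),
    ← Iic_union_Icc_eq_Iic (a := 0) (by positivity)]
  exact (hzero.union hcont.integrableOn_Icc).union (integrableOn_Ioi_abs_truncPowDiff_rpow hβ.1 h)

/-- For `α > 0`, integer `k ≥ 1` and `β ∈ (0,2)` with `α < k - 1/β`, the function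
`h_k(x) = ∑_{j=0}^{k} (-1)^j (k choose j) (x - j)_+^α` belongs to `L^β(ℝ)`,
i.e. `∫_ℝ |h_k(x)|^β dx < ∞`. -/
theorem stmt_2 (α : ℝ) (hα : 0 < α) (k : ℕ) (hk : 1 ≤ k) (β : ℝ)
    (hβ : β ∈ Set.Ioo (0 : ℝ) 2) (h : α < (k : ℝ) - 1 / β) :
    Integrable (fun x : ℝ =>
      |∑ j ∈ Finset.range (k + 1),
          (-1 : ℝ) ^ j * (k.choose j : ℝ) * (max (x - (j : ℝ)) 0) ^ α| ^ β) :=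
  stmt_2_general α hα k β hβ h
end

section
/- Let α ∈ (0,1), p > 0 and k ∈ ℕ with α < k − 1/p, and let h_k(x) = ∑_{j=0}^{k} (−1)^j (k choose j)(x−j)_+^α. Then for every u ∈ [0,1] the series V(u) := ∑_{l=0}^{∞} |h_k(l + u)|^p converges, and sup_{u∈[0,1]} V(u) < ∞. -/
/-!
Write `backDiff m f x = ∑_{j ≤ m} (-1)^j (m choose j) f(x - j)` for the `m`-th backward
difference, so that `h_k = backDiff k (t ↦ t_+^α)`. For `x > k` only the smooth branch `t^α` is
seen, and `backDiff (m+1) f x = backDiff m f x - backDiff m f (x - 1)` together with the mean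
value theorem trades each difference for a derivative: `|h_k(x)| ≤ C (x - k)^(α - k)`. Hence
`|h_k(l + u)|^p ≤ C^p (l - k)^(p(α - k))` for large `l`, which is summable because
`p(α - k) < -1`, while the finitely many remaining terms are bounded by continuity of `h_k` on a
compact interval. This gives one summable majorant for all `u ∈ [0,1]`.
-/
open Finset Set

noncomputable def backDiff (m : ℕ) (f : ℝ → ℝ) (x : ℝ) : ℝ :=
  ∑ j ∈ range (m + 1), (-1) ^ j * (m.choose j : ℝ) * f (x - j)

theorem backDiff_zero (f : ℝ → ℝ) (x : ℝ) : backDiff 0 f x = f x := by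
  simp [backDiff]

theorem backDiff_succ (m : ℕ) (f : ℝ → ℝ) (x : ℝ) :
    backDiff (m + 1) f x = backDiff m f x - backDiff m f (x - 1) := by
  have hext : backDiff m f x = ∑ j ∈ range (m + 2), (-1) ^ j * (m.choose j : ℝ) * f (x - j) := by
    simp [backDiff, sum_range_succ _ (m + 1)]
  rw [backDiff, hext, sum_range_succ', sum_range_succ' _ (m + 1), backDiff, add_sub_right_comm,
    ← sum_sub_distrib]
  simp only [Nat.choose_succ_succ', Nat.choose_zero_right]
  congr 1
  refine sum_congr rfl fun i _ => ?_
  push_cast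
  ring_nf

theorem backDiff_const_mul (m : ℕ) (c : ℝ) (f : ℝ → ℝ) (x : ℝ) :
    backDiff m (fun t => c * f t) x = c * backDiff m f x := by
  rw [backDiff, backDiff, mul_sum]
  exact sum_congr rfl fun _ _ => by ring

theorem backDiff_congr {m : ℕ} {f g : ℝ → ℝ} {x : ℝ} (h : ∀ j ≤ m, f (x - j) = g (x - j)) :
    backDiff m f x = backDiff m g x :=
  sum_congr rfl fun j hj => by rw [h j (Nat.lt_succ_iff.mp (mem_range.mp hj))]

theorem Continuous.backDiff {f : ℝ → ℝ} (hf : Continuous f) (m : ℕ) :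
    Continuous (backDiff m f) := by
  unfold _root_.backDiff
  fun_prop

theorem HasDerivAt.backDiff {m : ℕ} {f f' : ℝ → ℝ} {x : ℝ}
    (hf : ∀ j ≤ m, HasDerivAt f (f' (x - j)) (x - j)) :
    HasDerivAt (backDiff m f) (backDiff m f' x) x := by
  unfold _root_.backDiff
  refine HasDerivAt.fun_sum fun j hj => ?_
  exact ((hf j (Nat.lt_succ_iff.mp (mem_range.mp hj))).comp_sub_const x j).const_mul _

theorem hasDerivAt_backDiff_rpow {m : ℕ} (β : ℝ) {x : ℝ} (hx : m < x) :
    HasDerivAt (backDiff m (· ^ β)) (β * backDiff m (· ^ (β - 1)) x) x := by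
  rw [← backDiff_const_mul]
  refine HasDerivAt.backDiff fun j hj => Real.hasDerivAt_rpow_const (Or.inl ?_)
  have : (j : ℝ) ≤ m := by exact_mod_cast hj
  linarith

theorem exists_abs_backDiff_rpow_le (m : ℕ) {β : ℝ} (hβ : β ≤ m) :
    ∃ C, 0 ≤ C ∧ ∀ x : ℝ, m < x → |backDiff m (· ^ β) x| ≤ C * (x - m) ^ (β - m) := by
  induction m generalizing β with
  | zero =>
    refine ⟨1, zero_le_one, fun x hx => ?_⟩
    simp [backDiff_zero, abs_of_nonneg (Real.rpow_nonneg (le_of_lt (by simpa using hx)) β)]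
  | succ m ih =>
    obtain ⟨C, hC, hbound⟩ := ih (β := β - 1) (by push_cast at hβ; linarith)
    refine ⟨|β| * C, by positivity, fun x hx => ?_⟩
    push_cast at hβ hx ⊢
    have hIcc : ∀ s ∈ Icc (x - 1) x, (m : ℝ) < s := fun s hs => by linarith [hs.1]
    have hderiv : ∀ s ∈ Icc (x - 1) x, ‖β * backDiff m (· ^ (β - 1)) s‖
        ≤ |β| * C * (x - (m + 1)) ^ (β - (m + 1)) := by
      intro s hs
      rw [norm_mul, Real.norm_eq_abs, Real.norm_eq_abs, mul_assoc]
      gcongr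
      calc |backDiff m (· ^ (β - 1)) s| ≤ C * (s - m) ^ (β - 1 - m) := hbound s (hIcc s hs)
        _ ≤ C * (x - (m + 1)) ^ (β - (m + 1)) := by
          rw [show β - (m + 1) = β - 1 - m by ring]
          exact mul_le_mul_of_nonneg_left
            (Real.rpow_le_rpow_of_nonpos (by linarith) (by linarith [hs.1]) (by linarith)) hC
    have := Convex.norm_image_sub_le_of_norm_hasDerivWithin_le
      (fun s hs => (hasDerivAt_backDiff_rpow β (hIcc s hs)).hasDerivWithinAt) hderiv
      (convex_Icc _ _) (left_mem_Icc.2 (by linarith)) (right_mem_Icc.2 (by linarith))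
    rw [backDiff_succ]
    simpa using this

theorem exists_summable_majorant_of_decay {F : ℝ → ℝ} (hF : Continuous F) {a C γ : ℝ}
    (hC : 0 ≤ C) (hγ : γ < -1) (hdecay : ∀ x, a < x → |F x| ≤ C * (x - a) ^ γ) :
    ∃ g : ℕ → ℝ, Summable g ∧ ∀ u ∈ Icc (0 : ℝ) 1, ∀ l : ℕ, |F (l + u)| ≤ g l := by
  set N := ⌈a⌉₊ + 1
  obtain ⟨M, hM⟩ :=
    isCompact_Icc.exists_bound_of_continuousOn (hF.continuousOn (s := Icc (0 : ℝ) N))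
  refine ⟨fun l => if l < N then M else C * ((l - ⌈a⌉₊ : ℕ) : ℝ) ^ γ, ?_, fun u hu l => ?_⟩
  · rw [← summable_nat_add_iff N]
    have htail : Summable fun n : ℕ => ((n + 1 : ℕ) : ℝ) ^ γ :=
      (summable_nat_add_iff 1).2 (Real.summable_nat_rpow.2 hγ)
    refine (htail.mul_left C).congr fun n => ?_
    rw [if_neg (by omega), show n + N - ⌈a⌉₊ = n + 1 by omega]
  · dsimp only
    split_ifs with hl
    · refine hM _ ⟨by linarith [hu.1, (Nat.cast_nonneg l : (0 : ℝ) ≤ l)], ?_⟩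
      have : (l : ℝ) + 1 ≤ N := by exact_mod_cast hl
      linarith [hu.2]
    · have hlN : ((l - ⌈a⌉₊ : ℕ) : ℝ) = l - ⌈a⌉₊ := Nat.cast_sub (by omega)
      have hceil : (⌈a⌉₊ : ℝ) + 1 ≤ l := by exact_mod_cast not_lt.mp hl
      have ha := Nat.le_ceil a
      refine (hdecay _ (by linarith [hu.1])).trans (mul_le_mul_of_nonneg_left ?_ hC)
      rw [hlN]
      exact Real.rpow_le_rpow_of_nonpos (by linarith) (by linarith [hu.1]) (by linarith)

theorem stmt_5_general (α p : ℝ) (k : ℕ) (hα : α ∈ Set.Ioo (0 : ℝ) 1) (hp : 0 < p)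
    (h : α < (k : ℝ) - 1 / p) :
    (∀ u ∈ Set.Icc (0 : ℝ) 1,
      Summable (fun l : ℕ =>
        |∑ j ∈ Finset.range (k + 1),
            (-1 : ℝ) ^ j * (k.choose j : ℝ) * (max ((l : ℝ) + u - (j : ℝ)) 0) ^ α| ^ p)) ∧
    ∃ C : ℝ, ∀ u ∈ Set.Icc (0 : ℝ) 1,
      (∑' l : ℕ,
        |∑ j ∈ Finset.range (k + 1),
            (-1 : ℝ) ^ j * (k.choose j : ℝ) * (max ((l : ℝ) + u - (j : ℝ)) 0) ^ α| ^ p) ≤ C := by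
  set H := backDiff k (fun t => max t 0 ^ α)
  have hH : Continuous H :=
    ((continuous_id.max continuous_const).rpow_const fun _ => Or.inr hα.1.le).backDiff k
  have hγ : (α - k) * p < -1 := by
    rw [← lt_div_iff₀ hp, neg_div]
    linarith
  obtain ⟨C, hC, hdecay⟩ := exists_abs_backDiff_rpow_le k (β := α)
    (by linarith [one_div_pos.2 hp])
  have hdecay_pow : ∀ x : ℝ, k < x → |(|H x| ^ p)| ≤ C ^ p * (x - k) ^ ((α - k) * p) := by
    intro x hx
    have hHx : H x = backDiff k (· ^ α) x := backDiff_congr fun j hj => by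
      have : (j : ℝ) ≤ k := by exact_mod_cast hj
      rw [max_eq_left (by linarith)]
    rw [abs_of_nonneg (by positivity), Real.rpow_mul (by linarith), ← Real.mul_rpow hC
      (by positivity), hHx]
    exact Real.rpow_le_rpow (abs_nonneg _) (hdecay x hx) hp.le
  obtain ⟨g, hg, hle⟩ := exists_summable_majorant_of_decay
    (hH.abs.rpow_const fun _ => Or.inr hp.le) (Real.rpow_nonneg hC p) hγ hdecay_pow
  refine ⟨fun u hu => Summable.of_norm_bounded hg (hle u hu), ∑' l, g l, fun u hu => ?_⟩
  exact (Summable.of_norm_bounded hg (hle u hu)).tsum_le_tsum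
    (fun l => (le_abs_self _).trans (hle u hu l)) hg

/-- For `α ∈ (0,1)`, `p > 0`, `k ∈ ℕ` with `α < k - 1/p`, the series
`V(u) = ∑_{l≥0} |h_k(l+u)|^p` converges for every `u ∈ [0,1]`, and
`sup_{u ∈ [0,1]} V(u) < ∞`. -/
theorem stmt_5 (α p : ℝ) (k : ℕ) (hα : α ∈ Set.Ioo (0 : ℝ) 1) (hp : 0 < p)
    (hk : 1 ≤ k) (h : α < (k : ℝ) - 1 / p) :
    (∀ u ∈ Set.Icc (0 : ℝ) 1,
      Summable (fun l : ℕ =>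
        |∑ j ∈ Finset.range (k + 1),
            (-1 : ℝ) ^ j * (k.choose j : ℝ) * (max ((l : ℝ) + u - (j : ℝ)) 0) ^ α| ^ p)) ∧
    ∃ C : ℝ, ∀ u ∈ Set.Icc (0 : ℝ) 1,
      (∑' l : ℕ,
        |∑ j ∈ Finset.range (k + 1),
            (-1 : ℝ) ^ j * (k.choose j : ℝ) * (max ((l : ℝ) + u - (j : ℝ)) 0) ^ α| ^ p) ≤ C :=
  stmt_5_general α p k hα hp h
end

section
/- Fix α ∈ (0, 1/2) and p such that 1/(1−α) > p > 0. Then there is a constant K such that for all n ∈ ℕ and all x ∈ ℝ: ∫_0^{2k/n} |x n^{α+1/p} s^α|² · 1_{|x n^{α+1/p} s^α| ≤ 1} ds ≤ K(|x|^p + x²), where k ≥ 1 is a fixed integer. -/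
open MeasureTheory

/-!
Since `p ≤ 2`, the truncated square obeys `y ^ 2 * 1_{y ≤ 1} ≤ y ^ p`, so the integrand is at
most `|x| ^ p * n ^ (α * p + 1) * s ^ (α * p)`. Integrating over `[0, 2k/n]` produces the factor
`(2k/n) ^ (α * p + 1)`, which exactly cancels the power of `n`: the integral is at most
`(2k) ^ (α * p + 1) / (α * p + 1) * |x| ^ p`, uniformly in `n`.
-/

lemma sq_mul_ite_le_rpow {y p : ℝ} (hy : 0 ≤ y) (hp : 0 < p) (hp2 : p ≤ 2) :
    y ^ 2 * (if y ≤ 1 then 1 else 0) ≤ y ^ p := by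
  split_ifs with hy1
  · rcases hy.eq_or_lt with rfl | hy0
    · simp [Real.zero_rpow hp.ne']
    · rw [mul_one, ← Real.rpow_two]
      exact Real.rpow_le_rpow_of_exponent_ge hy0 hy1 hp2
  · simpa using Real.rpow_nonneg hy p

lemma le_two_of_lt_one_div_one_sub {α p : ℝ} (hα : α < 1 / 2) (hp : p < 1 / (1 - α)) :
    p ≤ 2 := by
  have : 1 / (1 - α) ≤ 2 := by rw [div_le_iff₀ (by linarith)]; linarith
  linarith

lemma intervalIntegral_sq_mul_ite_le {a α p T : ℝ} (hp : 0 < p) (hp2 : p ≤ 2)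
    (hαp : -1 < α * p) (hT : 0 ≤ T) :
    ∫ s in (0 : ℝ)..T, |a * s ^ α| ^ 2 * (if |a * s ^ α| ≤ 1 then 1 else 0)
      ≤ |a| ^ p * (T ^ (α * p + 1) / (α * p + 1)) := by
  have hE : α * p + 1 ≠ 0 := by linarith
  have hbound : ∀ s ∈ Set.Icc 0 T,
      |a * s ^ α| ^ 2 * (if |a * s ^ α| ≤ 1 then 1 else 0) ≤ |a| ^ p * s ^ (α * p) := by
    intro s hs
    calc _ ≤ |a * s ^ α| ^ p := sq_mul_ite_le_rpow (abs_nonneg _) hp hp2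
      _ = |a| ^ p * s ^ (α * p) := by
        rw [abs_mul, abs_of_nonneg (Real.rpow_nonneg hs.1 _),
          Real.mul_rpow (abs_nonneg a) (Real.rpow_nonneg hs.1 _), ← Real.rpow_mul hs.1]
  have hmeas : Measurable fun s : ℝ => |a * s ^ α| := by fun_prop
  have hint : IntervalIntegrable
      (fun s : ℝ => |a * s ^ α| ^ 2 * (if |a * s ^ α| ≤ 1 then 1 else 0)) volume 0 T := by
    refine (intervalIntegrable_const (c := (1 : ℝ))).mono_fun ?_ ?_
    · exact ((hmeas.pow_const 2).mul (Measurable.ite (measurableSet_le hmeas measurable_const)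
        measurable_const measurable_const)).aestronglyMeasurable
    · refine Filter.Eventually.of_forall fun s => ?_
      dsimp only
      split_ifs with h
      · rw [mul_one, norm_one, Real.norm_of_nonneg (by positivity)]
        exact pow_le_one₀ (abs_nonneg _) h
      · simp
  calc _ ≤ ∫ s in (0 : ℝ)..T, |a| ^ p * s ^ (α * p) :=
        intervalIntegral.integral_mono_on hT hint
          ((intervalIntegral.intervalIntegrable_rpow' hαp).const_mul _) hbound
    _ = |a| ^ p * (T ^ (α * p + 1) / (α * p + 1)) := by
        rw [intervalIntegral.integral_const_mul, integral_rpow (Or.inl hαp),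
          Real.zero_rpow hE, sub_zero]

lemma abs_mul_rpow_rpow_mul_div_rpow {x α p c N : ℝ} (hp : 0 < p) (hN : 0 < N) (hc : 0 ≤ c) :
    |x * N ^ (α + 1 / p)| ^ p * (c / N) ^ (α * p + 1) = |x| ^ p * c ^ (α * p + 1) := by
  have hNE : (0 : ℝ) < N ^ (α * p + 1) := Real.rpow_pos_of_pos hN _
  have hexp : (α + 1 / p) * p = α * p + 1 := by field_simp
  rw [abs_mul, abs_of_pos (Real.rpow_pos_of_pos hN _),
    Real.mul_rpow (abs_nonneg x) (Real.rpow_nonneg hN.le _), ← Real.rpow_mul hN.le, hexp,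
    Real.div_rpow hc hN.le]
  field_simp

/-- For `α ∈ (0,1/2)` and `0 < p < 1/(1-α)` there is `K` such that for all `n` and `x`:
`∫_0^{2k/n} |x n^{α+1/p} s^α|² 1_{|x n^{α+1/p} s^α| ≤ 1} ds ≤ K (|x|^p + x²)`. -/
theorem stmt_7 (α p : ℝ) (hα : α ∈ Set.Ioo (0 : ℝ) (1 / 2)) (hp : 0 < p)
    (hp2 : p < 1 / (1 - α)) (k : ℕ) (hk : 1 ≤ k) :
    ∃ K : ℝ, 0 < K ∧ ∀ (n : ℕ) (x : ℝ),
      (∫ s in (0 : ℝ)..(2 * (k : ℝ) / n),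
        |x * (n : ℝ) ^ (α + 1 / p) * s ^ α| ^ 2 *
          (if |x * (n : ℝ) ^ (α + 1 / p) * s ^ α| ≤ 1 then 1 else 0))
        ≤ K * (|x| ^ p + x ^ 2) := by
  set E := α * p + 1
  have hαp : 0 < α * p := mul_pos hα.1 hp
  have hp2' : p ≤ 2 := le_two_of_lt_one_div_one_sub hα.2 hp2
  refine ⟨(2 * k) ^ E / E, by positivity, fun n x => ?_⟩
  rcases Nat.eq_zero_or_pos n with rfl | hn
  · simp only [Nat.cast_zero, div_zero, intervalIntegral.integral_same]
    positivity
  calc _ ≤ |x * (n : ℝ) ^ (α + 1 / p)| ^ p * ((2 * k / n) ^ E / E) :=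
        intervalIntegral_sq_mul_ite_le hp hp2' (by linarith) (by positivity)
    _ = (2 * k) ^ E / E * |x| ^ p := by
        rw [mul_div_assoc', abs_mul_rpow_rpow_mul_div_rpow hp (by positivity) (by positivity)]; ring
    _ ≤ (2 * k) ^ E / E * (|x| ^ p + x ^ 2) := by
        gcongr; exact le_add_of_nonneg_right (sq_nonneg x)
end

section
/- Let k ≥ 1 be an integer, α ∈ (0, k − 1/p) with p > 0 and α ≠ k − 1/2. Then there is a constant K such that for all n ≥ k and all x ∈ ℝ: ∫_{k/n}^{1} |x n^{α+1/p−k} s^{α−k}|² · 1_{|x n^{α+1/p−k} s^{α−k}| ≤ 1} ds ≤ K(x² + |x|^p). -/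
open MeasureTheory

private lemma ptwise_bound (x A s β r : ℝ) (hA : 0 < A) (hs : 0 < s)
    (hr2 : r ≤ 2) :
    |x * A * s ^ β| ^ 2 * (if |x * A * s ^ β| ≤ 1 then (1:ℝ) else 0)
      ≤ (|x| * A) ^ r * s ^ (β * r) := by
  have hsβ : 0 < s ^ β := Real.rpow_pos_of_pos hs β
  have habs : |x * A * s ^ β| = |x| * A * s ^ β := by
    rw [abs_mul, abs_mul, abs_of_pos hA, abs_of_pos hsβ]
  split_ifs with h
  · simp only [mul_one]
    rw [habs] at h ⊢
    rcases eq_or_lt_of_le (abs_nonneg x) with h0 | h0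
    · rw [← h0]; simp only [zero_mul, ne_eq]
      rw [zero_pow (by norm_num)]
      positivity
    · have ht0 : 0 < |x| * A * s ^ β := by positivity
      calc (|x| * A * s ^ β) ^ 2 = (|x| * A * s ^ β) ^ (2:ℝ) :=
            (Real.rpow_two _).symm
        _ ≤ (|x| * A * s ^ β) ^ r := Real.rpow_le_rpow_of_exponent_ge ht0 h hr2
        _ = (|x| * A) ^ r * s ^ (β * r) := by
            rw [Real.mul_rpow (by positivity) hsβ.le, Real.rpow_mul hs.le]
  · rw [mul_zero]; positivity

set_option maxHeartbeats 1000000 in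
/-- For integer `k ≥ 1`, `p > 0`, `α ∈ (0, k - 1/p)` with `α ≠ k - 1/2`, there is `K`
such that for all `n ≥ k` and all `x`:
`∫_{k/n}^1 |x n^{α+1/p-k} s^{α-k}|² 1_{|x n^{α+1/p-k} s^{α-k}| ≤ 1} ds ≤ K (x² + |x|^p)`. -/
theorem stmt_8 (k : ℕ) (hk : 1 ≤ k) (α p : ℝ) (hp : 0 < p)
    (hα : α ∈ Set.Ioo (0 : ℝ) ((k : ℝ) - 1 / p)) (hα2 : α ≠ (k : ℝ) - 1 / 2) :
    ∃ K : ℝ, 0 < K ∧ ∀ (n : ℕ), k ≤ n → ∀ x : ℝ,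
      (∫ s in ((k : ℝ) / n)..1,
        |x * (n : ℝ) ^ (α + 1 / p - (k : ℝ)) * s ^ (α - (k : ℝ))| ^ 2 *
          (if |x * (n : ℝ) ^ (α + 1 / p - (k : ℝ)) * s ^ (α - (k : ℝ))| ≤ 1 then 1 else 0))
        ≤ K * (x ^ 2 + |x| ^ p) := by
  obtain ⟨hα0, hαk⟩ := hα
  have hβp : α - (k:ℝ) + 1/p < 0 := by
    have : α < (k:ℝ) - 1/p := hαk
    linarith
  set β : ℝ := α - (k:ℝ) with hβdef
  set r : ℝ := min p 2 with hrdef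
  have hr0 : 0 < r := lt_min hp two_pos
  have hr2 : r ≤ 2 := min_le_right _ _
  have hrp : r ≤ p := min_le_left _ _
  have he1 : β * r + 1 ≠ 0 := by
    rcases lt_or_ge p 2 with h | h
    · have hrp' : r = p := min_eq_left h.le
      have hb : β < -(1/p) := by rw [hβdef]; linarith
      have : β * p < (-(1/p)) * p := by
        exact mul_lt_mul_of_pos_right hb hp
      have hcalc : (-(1/p)) * p = -1 := by field_simp
      rw [hrp']
      intro hcon
      rw [hcalc] at this
      linarith
    · have hr2' : r = 2 := min_eq_right h
      rw [hr2']
      intro hcon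
      exact hα2 (by rw [hβdef] at hcon; linarith)
  have habs1 : 0 < |β * r + 1| := abs_pos.mpr he1
  refine ⟨1 / |β * r + 1|, by positivity, ?_⟩
  intro n hn x
  set K : ℝ := 1 / |β * r + 1| with hKdef
  have hK : 0 < K := by positivity
  have hn1 : (1:ℝ) ≤ (n:ℝ) := by exact_mod_cast hk.trans hn
  have hn0 : (0:ℝ) < n := by linarith
  have hk1 : (1:ℝ) ≤ (k:ℝ) := by exact_mod_cast hk
  have hknR : (k:ℝ) ≤ n := by exact_mod_cast hn
  set a : ℝ := (k:ℝ)/n with hadef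
  have ha0 : 0 < a := by positivity
  have ha1 : a ≤ 1 := by
    rw [hadef, div_le_one hn0]; exact hknR
  set A : ℝ := (n:ℝ) ^ (α + 1/p - (k:ℝ)) with hAdef
  have hA0 : 0 < A := Real.rpow_pos_of_pos hn0 _
  have hxs : 0 ≤ x ^ 2 + |x| ^ p := by positivity
  by_cases hf : IntervalIntegrable
      (fun s => |x * A * s ^ β| ^ 2 * (if |x * A * s ^ β| ≤ 1 then (1:ℝ) else 0)) volume a 1
  swap
  · rw [intervalIntegral.integral_undef hf]
    positivity
  have hg : IntervalIntegrable (fun s => (|x| * A) ^ r * s ^ (β * r)) volume a 1 := by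
    apply ContinuousOn.intervalIntegrable
    apply ContinuousOn.mul continuousOn_const
    intro s hs
    have hs0 : s ≠ 0 := by
      rw [Set.uIcc_of_le ha1] at hs
      exact ne_of_gt (lt_of_lt_of_le ha0 hs.1)
    exact (Real.continuousAt_rpow_const s (β*r) (Or.inl hs0)).continuousWithinAt
  have hmono : (∫ s in a..1,
        |x * A * s ^ β| ^ 2 * (if |x * A * s ^ β| ≤ 1 then (1:ℝ) else 0))
      ≤ ∫ s in a..1, (|x| * A) ^ r * s ^ (β * r) := by
    apply intervalIntegral.integral_mono_on ha1 hf hg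
    intro s hs
    exact ptwise_bound x A s β r hA0 (lt_of_lt_of_le ha0 hs.1) hr2
  have hint : (∫ s in a..1, (|x| * A) ^ r * s ^ (β * r))
      = (|x| * A) ^ r * ((1 - a ^ (β * r + 1)) / (β * r + 1)) := by
    rw [intervalIntegral.integral_const_mul,
      integral_rpow (Or.inr ⟨by intro hcon; exact he1 (by linarith),
        Set.notMem_uIcc_of_lt ha0 one_pos⟩), Real.one_rpow]
  -- key estimate : A ^ r * I ≤ K
  have hkey : A ^ r * ((1 - a ^ (β * r + 1)) / (β * r + 1)) ≤ K := by
    rcases lt_or_gt_of_ne he1 with hneg | hpos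
    · -- e + 1 < 0
      have hKeq : K = 1 / (-(β * r + 1)) := by rw [hKdef, abs_of_neg hneg]
      have hIeq : (1 - a ^ (β * r + 1)) / (β * r + 1)
          = (a ^ (β * r + 1) - 1) / (-(β * r + 1)) := by
        rw [← neg_div_neg_eq]; ring_nf
      have hI : (a ^ (β * r + 1) - 1) / (-(β * r + 1)) ≤ a ^ (β * r + 1) / (-(β * r + 1)) := by
        gcongr
        · linarith
        · linarith
      have hbound : A ^ r * a ^ (β * r + 1) ≤ 1 := by
        have h1 : a ^ (β * r + 1) ≤ ((1:ℝ)/n) ^ (β * r + 1) := by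
          apply Real.rpow_le_rpow_of_nonpos (by positivity) _ hneg.le
          rw [hadef]; gcongr
        have h2 : ((1:ℝ)/n) ^ (β * r + 1) = (n:ℝ) ^ (-(β * r + 1)) := by
          rw [one_div, Real.inv_rpow hn0.le, ← Real.rpow_neg hn0.le]
        have hAe : A ^ r = (n:ℝ) ^ ((β + 1/p) * r) := by
          rw [hAdef, Real.rpow_mul hn0.le]
          congr 2
          rw [hβdef]; ring
        calc A ^ r * a ^ (β * r + 1) ≤ A ^ r * ((1:ℝ)/n) ^ (β * r + 1) := by
              have : 0 < A ^ r := Real.rpow_pos_of_pos hA0 r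
              nlinarith
          _ = (n:ℝ) ^ ((β + 1/p) * r) * (n:ℝ) ^ (-(β * r + 1)) := by rw [h2, hAe]
          _ = (n:ℝ) ^ ((β + 1/p) * r + -(β * r + 1)) := by
              rw [← Real.rpow_add hn0]
          _ = (n:ℝ) ^ (r/p - 1) := by congr 1; ring
          _ ≤ 1 := by
              apply Real.rpow_le_one_of_one_le_of_nonpos hn1
              have : r / p ≤ 1 := (div_le_one hp).mpr hrp
              linarith
      calc A ^ r * ((1 - a ^ (β * r + 1)) / (β * r + 1))
          ≤ A ^ r * (a ^ (β * r + 1) / (-(β * r + 1))) := by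
            rw [hIeq]
            have : 0 < A ^ r := Real.rpow_pos_of_pos hA0 r
            apply mul_le_mul_of_nonneg_left hI this.le
        _ = (A ^ r * a ^ (β * r + 1)) / (-(β * r + 1)) := by ring
        _ ≤ 1 / (-(β * r + 1)) := by gcongr; linarith
        _ = K := hKeq.symm
    · -- e + 1 > 0
      have hKeq : K = 1 / (β * r + 1) := by rw [hKdef, abs_of_pos hpos]
      have hA1 : A ≤ 1 := Real.rpow_le_one_of_one_le_of_nonpos hn1 (by linarith)
      have hAr1 : A ^ r ≤ 1 := Real.rpow_le_one hA0.le hA1 hr0.le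
      have ha' : a ^ (β * r + 1) ≤ 1 := Real.rpow_le_one ha0.le ha1 hpos.le
      have hI0 : 0 ≤ (1 - a ^ (β * r + 1)) / (β * r + 1) := by
        apply div_nonneg (by linarith) hpos.le
      have hI : (1 - a ^ (β * r + 1)) / (β * r + 1) ≤ 1 / (β * r + 1) := by
        gcongr
        have := Real.rpow_nonneg ha0.le (β * r + 1)
        linarith
      calc A ^ r * ((1 - a ^ (β * r + 1)) / (β * r + 1))
          ≤ 1 * (1 / (β * r + 1)) := mul_le_mul hAr1 hI hI0 zero_le_one
        _ = K := by rw [one_mul, hKeq]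
  have hxr : |x| ^ r ≤ x ^ 2 + |x| ^ p := by
    rcases le_total p 2 with h | h
    · have hre : r = p := min_eq_left h
      rw [hre]
      have := sq_nonneg x
      linarith
    · have hre : r = 2 := min_eq_right h
      rw [hre, Real.rpow_two, sq_abs]
      have := Real.rpow_nonneg (abs_nonneg x) p
      linarith
  calc (∫ s in a..1, |x * A * s ^ β| ^ 2 * (if |x * A * s ^ β| ≤ 1 then (1:ℝ) else 0))
      ≤ ∫ s in a..1, (|x| * A) ^ r * s ^ (β * r) := hmono
    _ = (|x| * A) ^ r * ((1 - a ^ (β * r + 1)) / (β * r + 1)) := hint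
    _ = |x| ^ r * (A ^ r * ((1 - a ^ (β * r + 1)) / (β * r + 1))) := by
        rw [Real.mul_rpow (abs_nonneg x) hA0.le]; ring
    _ ≤ |x| ^ r * K := by
        apply mul_le_mul_of_nonneg_left hkey (Real.rpow_nonneg (abs_nonneg x) r)
    _ ≤ (x ^ 2 + |x| ^ p) * K := by
        apply mul_le_mul_of_nonneg_right hxr hK.le
    _ = K * (x ^ 2 + |x| ^ p) := by ring
end

section
/- Let β ∈ (0,2), p ∈ (0, β), r ∈ (p, 2], and ε > 0. With Φ_ρ(x) = a_p^{-1} ∫_ℝ (1 − cos(ux)) e^{−ρ^β|u|^β}|u|^{−1−p} du, there exists K_ε such that for all ρ₁, ρ₂ ≥ ε and all x ∈ ℝ: |Φ_{ρ₁}(x) − Φ_{ρ₂}(x)| ≤ K_ε |ρ₁^β − ρ₂^β| · |x|^r. -/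
open MeasureTheory Real

/-- `a_p = ∫ (1 - cos u)|u|^{-1-p} du`. -/
noncomputable def aConst (p : ℝ) : ℝ :=
  ∫ u : ℝ, (1 - Real.cos u) * |u| ^ (-1 - p)

/-- `Φ_ρ(x) = a_p⁻¹ ∫ (1 - cos(ux)) e^{-ρ^β |u|^β} |u|^{-1-p} du`. -/
noncomputable def Phi (β p ρ : ℝ) : ℝ → ℝ := fun x =>
  (aConst p)⁻¹ *
    ∫ u : ℝ, (1 - Real.cos (u * x)) * Real.exp (-(ρ ^ β) * |u| ^ β) * |u| ^ (-1 - p)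

/-!
Write `Φ_{ρ₁}(x) - Φ_{ρ₂}(x)` as `a_p⁻¹` times one integral. Since `ρ₁^β, ρ₂^β ≥ ε^β`, the mean
value theorem for `exp` bounds the difference of the two exponentials by
`|ρ₁^β - ρ₂^β| |u|^β e^{-ε^β |u|^β}`, and `1 - cos(ux) ≤ 2 |u|^r |x|^r`. What remains is
`∫ |u|^{β + r - 1 - p} e^{-ε^β |u|^β} du`, finite because `β + r - 1 - p > -1` near `0` and
the exponential decays at infinity.
-/

section Estimates

open Set

theorem integrable_comp_abs_of_integrableOn_Ioi {E : Type*} [NormedAddCommGroup E] {f : ℝ → E}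
    (hf : IntegrableOn f (Ioi 0)) : Integrable fun x => f |x| := by
  have hIoi : IntegrableOn (fun x => f |x|) (Ioi 0) :=
    hf.congr_fun (fun x hx => by rw [abs_of_pos hx]) measurableSet_Ioi
  have hIic : IntegrableOn (fun x => f |x|) (Iic 0) := by
    rw [← (Measure.measurePreserving_neg volume).integrableOn_comp_preimage
      (Homeomorph.neg ℝ).measurableEmbedding]
    simp_rw [Function.comp_def, abs_neg, neg_preimage, neg_Iic, neg_zero]
    exact (integrableOn_Ici_iff_integrableOn_Ioi (by simp)).mpr hIoi
  rw [← integrableOn_univ, ← Iic_union_Ioi]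
  exact hIic.union hIoi

theorem integrable_abs_rpow_mul_exp_neg_mul_abs_rpow {s c β : ℝ} (hs : -1 < s) (hc : 0 < c)
    (hβ : 0 < β) : Integrable fun u : ℝ => |u| ^ s * exp (-c * |u| ^ β) :=
  integrable_comp_abs_of_integrableOn_Ioi (integrableOn_rpow_mul_exp_neg_mul_rpow hs hβ hc)

theorem one_sub_cos_le_two_mul_abs_rpow {r : ℝ} (hr0 : 0 ≤ r) (hr2 : r ≤ 2) (t : ℝ) :
    1 - cos t ≤ 2 * |t| ^ r := by
  rcases le_or_gt 1 |t| with h | h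
  · linarith [one_le_rpow h hr0, neg_one_le_cos t]
  · calc 1 - cos t ≤ |t| ^ (2 : ℝ) / 2 := by
          rw [rpow_two, sq_abs]; linarith [one_sub_sq_div_two_le_cos (x := t)]
      _ ≤ 2 * |t| ^ r := by
          linarith [rpow_le_rpow_of_exponent_ge' (abs_nonneg t) h.le hr0 hr2,
            rpow_nonneg (abs_nonneg t) r]

theorem one_sub_cos_mul_le {r : ℝ} (hr0 : 0 ≤ r) (hr2 : r ≤ 2) (u x : ℝ) :
    1 - cos (u * x) ≤ 2 * (|u| ^ r * |x| ^ r) := by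
  simpa only [abs_mul, mul_rpow (abs_nonneg u) (abs_nonneg x)] using
    one_sub_cos_le_two_mul_abs_rpow hr0 hr2 (u * x)

theorem abs_exp_neg_mul_sub_exp_neg_mul_le {a b c t : ℝ} (ha : c ≤ a) (hb : c ≤ b) (ht : 0 ≤ t) :
    |exp (-a * t) - exp (-b * t)| ≤ |a - b| * t * exp (-c * t) := by
  wlog hab : a ≤ b generalizing a b
  · rw [abs_sub_comm, abs_sub_comm a]
    exact this hb ha (le_of_not_ge hab)
  have hdiff : 0 ≤ (b - a) * t := mul_nonneg (by linarith) ht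
  have hexp_le : exp (-b * t) ≤ exp (-a * t) := exp_le_exp.mpr (by nlinarith)
  rw [abs_of_nonneg (sub_nonneg.mpr hexp_le), abs_of_nonpos (by linarith : a - b ≤ 0)]
  calc exp (-a * t) - exp (-b * t) = exp (-a * t) * (1 - exp (-((b - a) * t))) := by
        rw [mul_sub, ← exp_add]; ring_nf
    _ ≤ exp (-c * t) * ((b - a) * t) :=
        mul_le_mul (exp_le_exp.mpr (by nlinarith)) (by linarith [add_one_le_exp (-((b - a) * t))])
          (by linarith [exp_le_one_iff.mpr (neg_nonpos.mpr hdiff)]) (exp_nonneg _)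
    _ = -(a - b) * t * exp (-c * t) := by ring

end Estimates

section PhiIntegrand

noncomputable def phiIntegrand (β p ρ x u : ℝ) : ℝ :=
  (1 - cos (u * x)) * exp (-(ρ ^ β) * |u| ^ β) * |u| ^ (-1 - p)

variable {β p r c ρ ρ₁ ρ₂ : ℝ}

theorem Phi_eq_integral (x : ℝ) : Phi β p ρ x = (aConst p)⁻¹ * ∫ u, phiIntegrand β p ρ x u :=
  rfl

theorem abs_phiIntegrand_le (hr0 : 0 ≤ r) (hr2 : r ≤ 2) (hρ : c ≤ ρ ^ β) (x u : ℝ) :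
    |phiIntegrand β p ρ x u| ≤ 2 * |x| ^ r * (|u| ^ (r - 1 - p) * exp (-c * |u| ^ β)) := by
  rcases eq_or_ne u 0 with rfl | hu
  · simp only [phiIntegrand, zero_mul, cos_zero, sub_self, abs_zero]
    positivity
  have hu' : 0 < |u| := abs_pos.mpr hu
  have hcos : 0 ≤ 1 - cos (u * x) := by linarith [cos_le_one (u * x)]
  rw [phiIntegrand, abs_of_nonneg (by positivity)]
  calc (1 - cos (u * x)) * exp (-(ρ ^ β) * |u| ^ β) * |u| ^ (-1 - p)
      ≤ 2 * (|u| ^ r * |x| ^ r) * exp (-c * |u| ^ β) * |u| ^ (-1 - p) := by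
        gcongr
        exact one_sub_cos_mul_le hr0 hr2 u x
    _ = 2 * |x| ^ r * (|u| ^ (r - 1 - p) * exp (-c * |u| ^ β)) := by
        rw [show r - 1 - p = r + (-1 - p) by ring, rpow_add hu']; ring

theorem integrable_phiIntegrand (hβ : 0 < β) (hp : p < 2) (hρ : 0 < ρ ^ β) (x : ℝ) :
    Integrable (phiIntegrand β p ρ x) := by
  refine Integrable.mono' ((integrable_abs_rpow_mul_exp_neg_mul_abs_rpow (by linarith) hρ
    hβ).const_mul (2 * |x| ^ (2 : ℝ))) ?_
    (Filter.Eventually.of_forall (abs_phiIntegrand_le zero_le_two le_rfl le_rfl x))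
  exact Measurable.aestronglyMeasurable (by unfold phiIntegrand; fun_prop)

theorem abs_phiIntegrand_sub_le (hr0 : 0 ≤ r) (hr2 : r ≤ 2) (h₁ : c ≤ ρ₁ ^ β) (h₂ : c ≤ ρ₂ ^ β)
    (x u : ℝ) :
    |phiIntegrand β p ρ₁ x u - phiIntegrand β p ρ₂ x u| ≤
      2 * |ρ₁ ^ β - ρ₂ ^ β| * |x| ^ r * (|u| ^ (β + r - 1 - p) * exp (-c * |u| ^ β)) := by
  rcases eq_or_ne u 0 with rfl | hu
  · simp only [phiIntegrand, zero_mul, cos_zero, sub_self, abs_zero]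
    positivity
  have hu' : 0 < |u| := abs_pos.mpr hu
  have hcos : 0 ≤ 1 - cos (u * x) := by linarith [cos_le_one (u * x)]
  have hfactor : phiIntegrand β p ρ₁ x u - phiIntegrand β p ρ₂ x u =
      (1 - cos (u * x)) * |u| ^ (-1 - p) *
        (exp (-(ρ₁ ^ β) * |u| ^ β) - exp (-(ρ₂ ^ β) * |u| ^ β)) := by
    simp only [phiIntegrand]; ring
  rw [hfactor, abs_mul, abs_of_nonneg (by positivity)]
  calc (1 - cos (u * x)) * |u| ^ (-1 - p) *
        |exp (-(ρ₁ ^ β) * |u| ^ β) - exp (-(ρ₂ ^ β) * |u| ^ β)|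
      ≤ 2 * (|u| ^ r * |x| ^ r) * |u| ^ (-1 - p) *
        (|ρ₁ ^ β - ρ₂ ^ β| * |u| ^ β * exp (-c * |u| ^ β)) := by
        gcongr
        · exact one_sub_cos_mul_le hr0 hr2 u x
        · exact abs_exp_neg_mul_sub_exp_neg_mul_le h₁ h₂ (rpow_nonneg (abs_nonneg u) β)
    _ = 2 * |ρ₁ ^ β - ρ₂ ^ β| * |x| ^ r * (|u| ^ (β + r - 1 - p) * exp (-c * |u| ^ β)) := by
        rw [show β + r - 1 - p = r + (-1 - p) + β by ring, rpow_add hu', rpow_add hu']; ring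

end PhiIntegrand

theorem abs_Phi_sub_le {β p r c ρ₁ ρ₂ : ℝ} (hβ : 0 < β) (hr0 : 0 ≤ r) (hpr : p < r) (hr2 : r ≤ 2)
    (hc : 0 < c) (h₁ : c ≤ ρ₁ ^ β) (h₂ : c ≤ ρ₂ ^ β) (x : ℝ) :
    |Phi β p ρ₁ x - Phi β p ρ₂ x| ≤
      2 * |(aConst p)⁻¹| * (∫ u : ℝ, |u| ^ (β + r - 1 - p) * exp (-c * |u| ^ β)) *
        |ρ₁ ^ β - ρ₂ ^ β| * |x| ^ r := by
  have hint : ∀ {ρ}, c ≤ ρ ^ β → Integrable (phiIntegrand β p ρ x) := fun hρ =>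
    integrable_phiIntegrand hβ (by linarith) (hc.trans_le hρ) x
  have hmajorant := integrable_abs_rpow_mul_exp_neg_mul_abs_rpow (s := β + r - 1 - p)
    (by linarith) hc hβ
  rw [Phi_eq_integral, Phi_eq_integral, ← mul_sub, ← integral_sub (hint h₁) (hint h₂), abs_mul]
  calc |(aConst p)⁻¹| * |∫ u, (phiIntegrand β p ρ₁ x u - phiIntegrand β p ρ₂ x u)|
      ≤ |(aConst p)⁻¹| * ∫ u, 2 * |ρ₁ ^ β - ρ₂ ^ β| * |x| ^ r *
          (|u| ^ (β + r - 1 - p) * exp (-c * |u| ^ β)) := by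
        gcongr
        exact norm_integral_le_of_norm_le (hmajorant.const_mul _)
          (Filter.Eventually.of_forall fun u =>
            (norm_eq_abs _).trans_le (abs_phiIntegrand_sub_le hr0 hr2 h₁ h₂ x u))
    _ = _ := by rw [integral_const_mul]; ring

/-- For `β ∈ (0,2)`, `p ∈ (0,β)`, `r ∈ (p,2]` and `ε > 0` there is `K_ε` with
`|Φ_{ρ₁}(x) - Φ_{ρ₂}(x)| ≤ K_ε |ρ₁^β - ρ₂^β| |x|^r` for all `ρ₁, ρ₂ ≥ ε`, `x ∈ ℝ`. -/
theorem stmt_12 (β p r ε : ℝ) (hβ : β ∈ Set.Ioo (0 : ℝ) 2) (hp : p ∈ Set.Ioo (0 : ℝ) β)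
    (hr : r ∈ Set.Ioc p 2) (hε : 0 < ε) :
    ∃ K : ℝ, 0 < K ∧ ∀ ρ₁ ρ₂ : ℝ, ε ≤ ρ₁ → ε ≤ ρ₂ → ∀ x : ℝ,
      |Phi β p ρ₁ x - Phi β p ρ₂ x| ≤ K * |ρ₁ ^ β - ρ₂ ^ β| * |x| ^ r := by
  obtain ⟨hβ0, -⟩ := hβ
  obtain ⟨hp0, -⟩ := hp
  obtain ⟨hpr, hr2⟩ := hr
  set K₀ := 2 * |(aConst p)⁻¹| * ∫ u : ℝ, |u| ^ (β + r - 1 - p) * exp (-ε ^ β * |u| ^ β)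
  have hK₀ : 0 ≤ K₀ := by positivity
  refine ⟨K₀ + 1, by linarith, fun ρ₁ ρ₂ hρ₁ hρ₂ x => ?_⟩
  have hbound := abs_Phi_sub_le hβ0 (hp0.trans hpr).le hpr hr2 (rpow_pos_of_pos hε β)
    (rpow_le_rpow hε.le hρ₁ hβ0.le) (rpow_le_rpow hε.le hρ₂ hβ0.le) x
  calc |Phi β p ρ₁ x - Phi β p ρ₂ x| ≤ K₀ * |ρ₁ ^ β - ρ₂ ^ β| * |x| ^ r := hbound
    _ ≤ (K₀ + 1) * |ρ₁ ^ β - ρ₂ ^ β| * |x| ^ r := by gcongr; linarith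
end

section
/- Let k ≥ 2 be an integer, β ∈ (0,2), α ∈ (0, k − 2/β), q ∈ [0, β/2), and let u : [0,∞) → ℝ be a measurable function satisfying |u(x)| ≤ K(x^α 1_{[0,k+1]}(x) + x^{α−k} 1_{(k+1,∞)}(x)). Then there exists r > 1 (depending on α, β, q, k) and a constant K' such that for all l ≥ 1: ∫_0^∞ |u(x+l)|^{β−q} |u(x)|^q dx ≤ K' l^{−r}. -/
open MeasureTheory intervalIntegral

set_option maxHeartbeats 2000000 in
/-- For `k ≥ 2`, `β ∈ (0,2)`, `α ∈ (0, k - 2/β)`, `q ∈ [0, β/2)`, and a measurable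
kernel `u` with `|u(x)| ≤ K (x^α 1_{[0,k+1]}(x) + x^{α-k} 1_{(k+1,∞)}(x))`, there are
`r > 1` and `K' > 0` with `∫_0^∞ |u(x+l)|^{β-q} |u(x)|^q dx ≤ K' l^{-r}` for all `l ≥ 1`. -/
theorem stmt_16 (k : ℕ) (hk : 2 ≤ k) (β α q K : ℝ) (hβ : β ∈ Set.Ioo (0 : ℝ) 2)
    (hα : α ∈ Set.Ioo (0 : ℝ) ((k : ℝ) - 2 / β)) (hq : q ∈ Set.Ico (0 : ℝ) (β / 2))
    (hK : 0 < K) (u : ℝ → ℝ) (hmeas : Measurable u)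
    (hbound : ∀ x : ℝ, 0 ≤ x →
      |u x| ≤ K * (if x ≤ (k : ℝ) + 1 then x ^ α else x ^ (α - (k : ℝ)))) :
    ∃ r : ℝ, 1 < r ∧ ∃ K' : ℝ, 0 < K' ∧ ∀ l : ℕ, 1 ≤ l →
      ∫⁻ x in Set.Ioi (0 : ℝ), ENNReal.ofReal (|u (x + (l : ℝ))| ^ (β - q) * |u x| ^ q)
        ≤ ENNReal.ofReal (K' * (l : ℝ) ^ (-r)) := by
  obtain ⟨hβ0, hβ2⟩ := hβ
  obtain ⟨hα0, hαub⟩ := hα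
  obtain ⟨hq0, hqβ⟩ := hq
  set kk : ℝ := (k : ℝ) with hkk
  have hkk2 : (2:ℝ) ≤ kk := by rw [hkk]; exact_mod_cast hk
  have hβq : 0 < β - q := by linarith
  have hαkneg : α - kk < 0 := by
    have h2β : 0 < 2 / β := by positivity
    linarith
  have hab2 : (α - kk) * β < -2 := by
    have h1 : (α - kk) * β < (-(2/β)) * β := by
      apply mul_lt_mul_of_pos_right _ hβ0
      linarith
    have h2 : (-(2/β)) * β = -2 := by field_simp
    linarith
  set a : ℝ := (α - kk) * (β - q) with ha_def
  set b : ℝ := (α - kk) * q with hb_def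
  have hb0 : b ≤ 0 := mul_nonpos_of_nonpos_of_nonneg hαkneg.le hq0
  have ha1 : a < -1 := by
    have h1 : (α - kk) * (β/2) ≤ (α - kk) * q := by
      apply mul_le_mul_of_nonpos_left _ hαkneg.le
      linarith
    have expand : a = (α - kk) * β - (α - kk) * q := by rw [ha_def]; ring
    have hhalf : (α - kk) * (β/2) = ((α - kk) * β) / 2 := by ring
    linarith
  have ha0 : a ≤ 0 := by linarith
  set m : ℝ := min (-(1:ℝ)/2) ((-3 - a)/2) with hm_def
  set b' : ℝ := max b m with hb'_def
  have hm1 : -1 < m := by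
    apply lt_min (by norm_num)
    linarith
  have hb'1 : -1 < b' := lt_of_lt_of_le hm1 (le_max_right _ _)
  have hb'0 : b' ≤ 0 := max_le hb0 (le_trans (min_le_left _ _) (by norm_num))
  have hbb' : b ≤ b' := le_max_left _ _
  have hs1 : a + b' + 1 < -1 := by
    have habe : a + b = (α - kk) * β := by rw [ha_def, hb_def]; ring
    rcases max_cases b m with ⟨h, _⟩ | ⟨h, _⟩ <;> rw [hb'_def, h]
    · linarith
    · have : m ≤ (-3 - a)/2 := min_le_right _ _
      linarith
  set s : ℝ := a + b' + 1 with hs_def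
  set r : ℝ := min (-a) (-s) with hr_def
  have hr : 1 < r := lt_min (by linarith) (by linarith)
  have har : a ≤ -r := by
    have := min_le_left (-a) (-s)
    rw [hr_def]; linarith
  have hsr : s ≤ -r := by
    have := min_le_right (-a) (-s)
    rw [hr_def]; linarith
  -- constants
  set C1 : ℝ := (kk + 1) ^ kk with hC1_def
  have hC1 : 1 ≤ C1 := Real.one_le_rpow (by linarith) (by linarith)
  have hKC1 : 0 < K * C1 := mul_pos hK (by linarith)
  set A2 : ℝ := (K * C1) ^ (β - q) * K ^ q with hA2_def
  have hA2 : 0 < A2 := mul_pos (Real.rpow_pos_of_pos hKC1 _) (Real.rpow_pos_of_pos hK _)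
  set A1 : ℝ := A2 * (kk + 1) ^ (α * q) with hA1_def
  have hA1 : 0 < A1 := mul_pos hA2 (Real.rpow_pos_of_pos (by linarith) _)
  set K' : ℝ := A1 * (kk + 1) + A2 * (kk + 2) / (b' + 1) + A2 / (-(a + 1)) with hK'_def
  have hC2 : 0 < A2 * (kk + 2) / (b' + 1) := div_pos (mul_pos hA2 (by linarith)) (by linarith)
  have hC3 : 0 < A2 / (-(a + 1)) := div_pos hA2 (by linarith)
  have hK' : 0 < K' := by
    rw [hK'_def]
    have h0 : 0 < A1 * (kk + 1) := mul_pos hA1 (by linarith)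
    linarith
  refine ⟨r, hr, K', hK', ?_⟩
  intro l hl
  have hl1 : (1:ℝ) ≤ (l:ℝ) := by exact_mod_cast hl
  have hl0 : (0:ℝ) < (l:ℝ) := by linarith
  set L : ℝ := (l:ℝ) + (kk + 1) with hL_def
  have hL0 : 0 < L := by linarith
  have hkL : kk + 1 ≤ L := by linarith
  have hlL : (l:ℝ) ≤ L := by linarith
  -- key pointwise bound for arguments ≥ 1
  have key1 : ∀ y : ℝ, 1 ≤ y → |u y| ≤ K * C1 * y ^ (α - kk) := by
    intro y hy
    have hy0 : 0 < y := by linarith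
    have hb := hbound y (by linarith)
    by_cases h : y ≤ kk + 1
    · rw [if_pos h] at hb
      have e1 : y ^ α = y ^ (α - kk) * y ^ kk := by
        rw [← Real.rpow_add hy0]; ring_nf
      have e2 : y ^ kk ≤ C1 := Real.rpow_le_rpow hy0.le h (by linarith)
      calc |u y| ≤ K * (y ^ (α - kk) * y ^ kk) := by rw [← e1]; exact hb
        _ ≤ K * (y ^ (α - kk) * C1) := by
            apply mul_le_mul_of_nonneg_left _ hK.le
            exact mul_le_mul_of_nonneg_left e2 (Real.rpow_nonneg hy0.le _)
        _ = K * C1 * y ^ (α - kk) := by ring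
    · rw [if_neg h] at hb
      calc |u y| ≤ K * y ^ (α - kk) := hb
        _ ≤ C1 * (K * y ^ (α - kk)) :=
            le_mul_of_one_le_left (mul_nonneg hK.le (Real.rpow_nonneg hy0.le _)) hC1
        _ = K * C1 * y ^ (α - kk) := by ring
  -- bound on the first factor
  have keyfac : ∀ x : ℝ, 0 < x →
      |u (x + (l:ℝ))| ^ (β - q) ≤ (K * C1) ^ (β - q) * (x + (l:ℝ)) ^ a := by
    intro x hx
    have hxl1 : (1:ℝ) ≤ x + l := by linarith
    have hxl0 : (0:ℝ) < x + l := by linarith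
    calc |u (x + (l:ℝ))| ^ (β - q)
        ≤ (K * C1 * (x + (l:ℝ)) ^ (α - kk)) ^ (β - q) :=
          Real.rpow_le_rpow (abs_nonneg _) (key1 _ hxl1) hβq.le
      _ = (K * C1) ^ (β - q) * (x + (l:ℝ)) ^ a := by
          rw [ha_def, Real.rpow_mul hxl0.le,
            Real.mul_rpow hKC1.le (Real.rpow_nonneg hxl0.le _)]
  -- bounds on the second factor
  have keyfac2a : ∀ x ∈ Set.Ioc (0:ℝ) (kk+1), |u x| ^ q ≤ K ^ q * (kk+1) ^ (α * q) := by
    intro x hx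
    obtain ⟨hx0, hxk⟩ := hx
    have hb := hbound x hx0.le
    rw [if_pos hxk] at hb
    calc |u x| ^ q ≤ (K * x ^ α) ^ q := Real.rpow_le_rpow (abs_nonneg _) hb hq0
      _ = K ^ q * x ^ (α * q) := by
          rw [Real.mul_rpow hK.le (Real.rpow_nonneg hx0.le _), ← Real.rpow_mul hx0.le]
      _ ≤ K ^ q * (kk+1) ^ (α * q) := by
          apply mul_le_mul_of_nonneg_left _ (Real.rpow_nonneg hK.le _)
          exact Real.rpow_le_rpow hx0.le hxk (mul_nonneg hα0.le hq0)
  have keyfac2b : ∀ x ∈ Set.Ioi (kk+1), |u x| ^ q ≤ K ^ q * x ^ b' := by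
    intro x hx
    have hx1 : (1:ℝ) ≤ x := by have := Set.mem_Ioi.1 hx; linarith
    have hx0 : (0:ℝ) < x := by linarith
    have hb := hbound x hx0.le
    rw [if_neg (not_le.2 (Set.mem_Ioi.1 hx))] at hb
    calc |u x| ^ q ≤ (K * x ^ (α - kk)) ^ q := Real.rpow_le_rpow (abs_nonneg _) hb hq0
      _ = K ^ q * x ^ b := by
          rw [hb_def, Real.rpow_mul hx0.le,
            Real.mul_rpow hK.le (Real.rpow_nonneg hx0.le _)]
      _ ≤ K ^ q * x ^ b' := by
          apply mul_le_mul_of_nonneg_left _ (Real.rpow_nonneg hK.le _)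
          exact Real.rpow_le_rpow_of_exponent_le hx1 hbb'
  -- pointwise bounds on the three regions
  have P1 : ∀ x ∈ Set.Ioc (0:ℝ) (kk+1),
      |u (x + (l:ℝ))| ^ (β - q) * |u x| ^ q ≤ A1 * (l:ℝ) ^ a := by
    intro x hx
    have hx0 : 0 < x := hx.1
    have hxl0 : (0:ℝ) < x + l := by linarith
    have h1 := keyfac x hx0
    have h2 := keyfac2a x hx
    have hla : (x + (l:ℝ)) ^ a ≤ (l:ℝ) ^ a :=
      Real.rpow_le_rpow_of_nonpos hl0 (by linarith) ha0
    calc |u (x + (l:ℝ))| ^ (β - q) * |u x| ^ q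
        ≤ ((K * C1) ^ (β - q) * (x + (l:ℝ)) ^ a) * (K ^ q * (kk+1) ^ (α * q)) :=
          mul_le_mul h1 h2 (Real.rpow_nonneg (abs_nonneg _) _)
            (mul_nonneg (Real.rpow_nonneg hKC1.le _) (Real.rpow_nonneg hxl0.le _))
      _ = A1 * (x + (l:ℝ)) ^ a := by rw [hA1_def, hA2_def]; ring
      _ ≤ A1 * (l:ℝ) ^ a := mul_le_mul_of_nonneg_left hla hA1.le
  have P2 : ∀ x ∈ Set.Ioc (kk+1) L,
      |u (x + (l:ℝ))| ^ (β - q) * |u x| ^ q ≤ (A2 * (l:ℝ) ^ a) * x ^ b' := by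
    intro x hx
    have hx0 : (0:ℝ) < x := by have := hx.1; linarith
    have hxl0 : (0:ℝ) < x + l := by linarith
    have h1 := keyfac x hx0
    have h2 := keyfac2b x hx.1
    have hla : (x + (l:ℝ)) ^ a ≤ (l:ℝ) ^ a :=
      Real.rpow_le_rpow_of_nonpos hl0 (by linarith) ha0
    calc |u (x + (l:ℝ))| ^ (β - q) * |u x| ^ q
        ≤ ((K * C1) ^ (β - q) * (x + (l:ℝ)) ^ a) * (K ^ q * x ^ b') :=
          mul_le_mul h1 h2 (Real.rpow_nonneg (abs_nonneg _) _)
            (mul_nonneg (Real.rpow_nonneg hKC1.le _) (Real.rpow_nonneg hxl0.le _))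
      _ = (A2 * (x + (l:ℝ)) ^ a) * x ^ b' := by rw [hA2_def]; ring
      _ ≤ (A2 * (l:ℝ) ^ a) * x ^ b' := by
          apply mul_le_mul_of_nonneg_right _ (Real.rpow_nonneg hx0.le _)
          exact mul_le_mul_of_nonneg_left hla hA2.le
  have P3 : ∀ x ∈ Set.Ioi L,
      |u (x + (l:ℝ))| ^ (β - q) * |u x| ^ q ≤ (A2 * (l:ℝ) ^ b') * x ^ a := by
    intro x hx
    have hxL : L < x := Set.mem_Ioi.1 hx
    have hx0 : (0:ℝ) < x := by linarith
    have hxk : x ∈ Set.Ioi (kk+1) := Set.mem_Ioi.2 (by linarith)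
    have hxl0 : (0:ℝ) < x + l := by linarith
    have h1 := keyfac x hx0
    have h2 := keyfac2b x hxk
    have hxa : (x + (l:ℝ)) ^ a ≤ x ^ a :=
      Real.rpow_le_rpow_of_nonpos hx0 (by linarith) ha0
    have hxb : x ^ b' ≤ (l:ℝ) ^ b' :=
      Real.rpow_le_rpow_of_nonpos hl0 (by linarith) hb'0
    calc |u (x + (l:ℝ))| ^ (β - q) * |u x| ^ q
        ≤ ((K * C1) ^ (β - q) * (x + (l:ℝ)) ^ a) * (K ^ q * x ^ b') :=
          mul_le_mul h1 h2 (Real.rpow_nonneg (abs_nonneg _) _)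
            (mul_nonneg (Real.rpow_nonneg hKC1.le _) (Real.rpow_nonneg hxl0.le _))
      _ = A2 * ((x + (l:ℝ)) ^ a * x ^ b') := by rw [hA2_def]; ring
      _ ≤ A2 * (x ^ a * (l:ℝ) ^ b') := by
          apply mul_le_mul_of_nonneg_left _ hA2.le
          exact mul_le_mul hxa hxb (Real.rpow_nonneg hx0.le _) (Real.rpow_nonneg hx0.le _)
      _ = (A2 * (l:ℝ) ^ b') * x ^ a := by ring
  -- the three integral bounds
  set F : ℝ → ENNReal := fun x => ENNReal.ofReal (|u (x + (l:ℝ))| ^ (β - q) * |u x| ^ q)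
    with hF_def
  have hI1 : ∫⁻ x in Set.Ioc (0:ℝ) (kk+1), F x
      ≤ ENNReal.ofReal (A1 * (kk+1) * (l:ℝ) ^ a) := by
    calc ∫⁻ x in Set.Ioc (0:ℝ) (kk+1), F x
        ≤ ∫⁻ _ in Set.Ioc (0:ℝ) (kk+1), ENNReal.ofReal (A1 * (l:ℝ) ^ a) :=
          setLIntegral_mono' measurableSet_Ioc
            (fun x hx => ENNReal.ofReal_le_ofReal (P1 x hx))
      _ = ENNReal.ofReal (A1 * (l:ℝ) ^ a) * volume (Set.Ioc (0:ℝ) (kk+1)) :=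
          setLIntegral_const _ _
      _ = ENNReal.ofReal (A1 * (l:ℝ) ^ a) * ENNReal.ofReal (kk+1) := by
          rw [Real.volume_Ioc, sub_zero]
      _ = ENNReal.ofReal (A1 * (kk+1) * (l:ℝ) ^ a) := by
          rw [← ENNReal.ofReal_mul (mul_nonneg hA1.le (Real.rpow_nonneg hl0.le _))]
          ring_nf
  have hint2 : IntegrableOn (fun x : ℝ => (A2 * (l:ℝ) ^ a) * x ^ b') (Set.Ioc 0 L) := by
    exact ((intervalIntegrable_rpow' hb'1 (a := 0) (b := L)).1).const_mul _
  have hnn2 : 0 ≤ᵐ[volume.restrict (Set.Ioc (0:ℝ) L)]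
      fun x : ℝ => (A2 * (l:ℝ) ^ a) * x ^ b' := by
    refine (ae_restrict_iff' measurableSet_Ioc).2 (ae_of_all _ fun x hx => ?_)
    exact mul_nonneg (mul_nonneg hA2.le (Real.rpow_nonneg hl0.le _))
      (Real.rpow_nonneg hx.1.le _)
  have hI2 : ∫⁻ x in Set.Ioc (kk+1) L, F x
      ≤ ENNReal.ofReal ((A2 * (l:ℝ) ^ a) * (L ^ (b'+1) / (b'+1))) := by
    calc ∫⁻ x in Set.Ioc (kk+1) L, F x
        ≤ ∫⁻ x in Set.Ioc (kk+1) L, ENNReal.ofReal ((A2 * (l:ℝ) ^ a) * x ^ b') :=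
          setLIntegral_mono' measurableSet_Ioc
            (fun x hx => ENNReal.ofReal_le_ofReal (P2 x hx))
      _ ≤ ∫⁻ x in Set.Ioc (0:ℝ) L, ENNReal.ofReal ((A2 * (l:ℝ) ^ a) * x ^ b') :=
          lintegral_mono_set (Set.Ioc_subset_Ioc_left (by linarith))
      _ = ENNReal.ofReal (∫ x in Set.Ioc (0:ℝ) L, (A2 * (l:ℝ) ^ a) * x ^ b') :=
          (ofReal_integral_eq_lintegral_ofReal hint2 hnn2).symm
      _ = ENNReal.ofReal ((A2 * (l:ℝ) ^ a) * (L ^ (b'+1) / (b'+1))) := by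
          rw [MeasureTheory.integral_const_mul,
            ← intervalIntegral.integral_of_le hL0.le,
            integral_rpow (Or.inl hb'1),
            Real.zero_rpow (by linarith : b' + 1 ≠ 0), sub_zero]
  have hint3 : IntegrableOn (fun x : ℝ => (A2 * (l:ℝ) ^ b') * x ^ a) (Set.Ioi L) := by
    exact (integrableOn_Ioi_rpow_of_lt ha1 hL0).const_mul _
  have hnn3 : 0 ≤ᵐ[volume.restrict (Set.Ioi L)]
      fun x : ℝ => (A2 * (l:ℝ) ^ b') * x ^ a := by
    refine (ae_restrict_iff' measurableSet_Ioi).2 (ae_of_all _ fun x hx => ?_)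
    exact mul_nonneg (mul_nonneg hA2.le (Real.rpow_nonneg hl0.le _))
      (Real.rpow_nonneg (by have := Set.mem_Ioi.1 hx; linarith) _)
  have hI3 : ∫⁻ x in Set.Ioi L, F x
      ≤ ENNReal.ofReal ((A2 * (l:ℝ) ^ b') * (-L ^ (a+1) / (a+1))) := by
    calc ∫⁻ x in Set.Ioi L, F x
        ≤ ∫⁻ x in Set.Ioi L, ENNReal.ofReal ((A2 * (l:ℝ) ^ b') * x ^ a) :=
          setLIntegral_mono' measurableSet_Ioi
            (fun x hx => ENNReal.ofReal_le_ofReal (P3 x hx))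
      _ = ENNReal.ofReal (∫ x in Set.Ioi L, (A2 * (l:ℝ) ^ b') * x ^ a) :=
          (ofReal_integral_eq_lintegral_ofReal hint3 hnn3).symm
      _ = ENNReal.ofReal ((A2 * (l:ℝ) ^ b') * (-L ^ (a+1) / (a+1))) := by
          rw [MeasureTheory.integral_const_mul, integral_Ioi_rpow_of_lt ha1 hL0]
  -- splitting the domain
  have hsplit : ∫⁻ x in Set.Ioi (0:ℝ), F x
      = (∫⁻ x in Set.Ioc (0:ℝ) (kk+1), F x) + (∫⁻ x in Set.Ioc (kk+1) L, F x)
        + (∫⁻ x in Set.Ioi L, F x) := by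
    rw [← Set.Ioc_union_Ioi_eq_Ioi (show (0:ℝ) ≤ kk+1 by linarith),
      lintegral_union measurableSet_Ioi Set.Ioc_disjoint_Ioi_same,
      ← Set.Ioc_union_Ioi_eq_Ioi hkL,
      lintegral_union measurableSet_Ioi Set.Ioc_disjoint_Ioi_same, add_assoc]
  -- final real-number estimates
  have hlar : (l:ℝ) ^ a ≤ (l:ℝ) ^ (-r) := Real.rpow_le_rpow_of_exponent_le hl1 har
  have hlsr : (l:ℝ) ^ s ≤ (l:ℝ) ^ (-r) := Real.rpow_le_rpow_of_exponent_le hl1 hsr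
  have hT1 : A1 * (kk+1) * (l:ℝ) ^ a ≤ A1 * (kk+1) * (l:ℝ) ^ (-r) :=
    mul_le_mul_of_nonneg_left hlar (mul_nonneg hA1.le (by linarith))
  have hT2 : (A2 * (l:ℝ) ^ a) * (L ^ (b'+1) / (b'+1))
      ≤ (A2 * (kk+2) / (b'+1)) * (l:ℝ) ^ (-r) := by
    have e1 : L ^ (b'+1) ≤ (kk+2) * (l:ℝ) ^ (b'+1) := by
      calc L ^ (b'+1) ≤ ((kk+2) * (l:ℝ)) ^ (b'+1) :=
            Real.rpow_le_rpow hL0.le (by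
              have e0 : ((kk+2) * (l:ℝ)) = (l:ℝ) + ((kk+1) * (l:ℝ)) := by ring
              have e3 : (kk+1) * 1 ≤ (kk+1) * (l:ℝ) :=
                mul_le_mul_of_nonneg_left hl1 (by linarith)
              linarith) (by linarith)
        _ = (kk+2) ^ (b'+1) * (l:ℝ) ^ (b'+1) := Real.mul_rpow (by linarith) hl0.le
        _ ≤ (kk+2) * (l:ℝ) ^ (b'+1) := by
            have h1 : (kk+2) ^ (b'+1) ≤ (kk+2) := by
              calc (kk+2) ^ (b'+1) ≤ (kk+2) ^ (1:ℝ) :=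
                    Real.rpow_le_rpow_of_exponent_le (by linarith) (by linarith)
                _ = kk+2 := Real.rpow_one _
            exact mul_le_mul_of_nonneg_right h1 (Real.rpow_nonneg hl0.le _)
    have e2 : a + (b' + 1) = s := by rw [hs_def]; ring
    calc (A2 * (l:ℝ) ^ a) * (L ^ (b'+1) / (b'+1))
        ≤ (A2 * (l:ℝ) ^ a) * ((kk+2) * (l:ℝ) ^ (b'+1) / (b'+1)) := by
          apply mul_le_mul_of_nonneg_left _ (mul_nonneg hA2.le (Real.rpow_nonneg hl0.le _))
          exact (div_le_div_iff_of_pos_right (show (0:ℝ) < b'+1 by linarith)).2 e1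
      _ = (A2 * (kk+2) / (b'+1)) * ((l:ℝ) ^ a * (l:ℝ) ^ (b'+1)) := by ring
      _ = (A2 * (kk+2) / (b'+1)) * (l:ℝ) ^ s := by rw [← Real.rpow_add hl0, e2]
      _ ≤ (A2 * (kk+2) / (b'+1)) * (l:ℝ) ^ (-r) :=
          mul_le_mul_of_nonneg_left hlsr hC2.le
  have hT3 : (A2 * (l:ℝ) ^ b') * (-L ^ (a+1) / (a+1))
      ≤ (A2 / (-(a+1))) * (l:ℝ) ^ (-r) := by
    have e1 : L ^ (a+1) ≤ (l:ℝ) ^ (a+1) :=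
      Real.rpow_le_rpow_of_nonpos hl0 hlL (by linarith)
    have e2 : b' + (a + 1) = s := by rw [hs_def]; ring
    calc (A2 * (l:ℝ) ^ b') * (-L ^ (a+1) / (a+1))
        = (A2 * (l:ℝ) ^ b') * (L ^ (a+1) / (-(a+1))) := by rw [div_neg, neg_div]
      _ ≤ (A2 * (l:ℝ) ^ b') * ((l:ℝ) ^ (a+1) / (-(a+1))) := by
          apply mul_le_mul_of_nonneg_left _ (mul_nonneg hA2.le (Real.rpow_nonneg hl0.le _))
          exact (div_le_div_iff_of_pos_right (show (0:ℝ) < -(a+1) by linarith)).2 e1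
      _ = (A2 / (-(a+1))) * ((l:ℝ) ^ b' * (l:ℝ) ^ (a+1)) := by ring
      _ = (A2 / (-(a+1))) * (l:ℝ) ^ s := by rw [← Real.rpow_add hl0, e2]
      _ ≤ (A2 / (-(a+1))) * (l:ℝ) ^ (-r) := mul_le_mul_of_nonneg_left hlsr hC3.le
  -- putting everything together
  have hnnT1 : 0 ≤ A1 * (kk+1) * (l:ℝ) ^ a :=
    mul_nonneg (mul_nonneg hA1.le (by linarith)) (Real.rpow_nonneg hl0.le _)
  have hnnT2 : 0 ≤ (A2 * (l:ℝ) ^ a) * (L ^ (b'+1) / (b'+1)) := by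
    have h1 := Real.rpow_nonneg hl0.le a
    have h2 := Real.rpow_nonneg hL0.le (b'+1)
    have h3 : (0:ℝ) < b' + 1 := by linarith
    positivity
  have hnnT3 : 0 ≤ (A2 * (l:ℝ) ^ b') * (-L ^ (a+1) / (a+1)) := by
    have h1 := Real.rpow_nonneg hl0.le b'
    have h2 := Real.rpow_nonneg hL0.le (a+1)
    have h4 : 0 ≤ -L ^ (a+1) / (a+1) := div_nonneg_of_nonpos (by linarith) (by linarith)
    exact mul_nonneg (mul_nonneg hA2.le h1) h4
  calc ∫⁻ x in Set.Ioi (0:ℝ), F x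
      ≤ ENNReal.ofReal (A1 * (kk+1) * (l:ℝ) ^ a)
        + ENNReal.ofReal ((A2 * (l:ℝ) ^ a) * (L ^ (b'+1) / (b'+1)))
        + ENNReal.ofReal ((A2 * (l:ℝ) ^ b') * (-L ^ (a+1) / (a+1))) := by
        rw [hsplit]; exact add_le_add (add_le_add hI1 hI2) hI3
    _ = ENNReal.ofReal (A1 * (kk+1) * (l:ℝ) ^ a
        + (A2 * (l:ℝ) ^ a) * (L ^ (b'+1) / (b'+1))
        + (A2 * (l:ℝ) ^ b') * (-L ^ (a+1) / (a+1))) := by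
        rw [← ENNReal.ofReal_add hnnT1 hnnT2,
          ← ENNReal.ofReal_add (add_nonneg hnnT1 hnnT2) hnnT3]
    _ ≤ ENNReal.ofReal (K' * (l:ℝ) ^ (-r)) := by
        apply ENNReal.ofReal_le_ofReal
        calc A1 * (kk+1) * (l:ℝ) ^ a
            + (A2 * (l:ℝ) ^ a) * (L ^ (b'+1) / (b'+1))
            + (A2 * (l:ℝ) ^ b') * (-L ^ (a+1) / (a+1))
            ≤ A1 * (kk+1) * (l:ℝ) ^ (-r) + (A2 * (kk+2) / (b'+1)) * (l:ℝ) ^ (-r)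
              + (A2 / (-(a+1))) * (l:ℝ) ^ (-r) := by linarith
          _ = K' * (l:ℝ) ^ (-r) := by rw [hK'_def]; ring
end
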